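/- arXiv:2101.06297 — 6 statements merged into one kernel-verified Lean document; each statement's English description precedes it below -/
import Mathlib

section
/- Let U and V be real Hilbert spaces, B : U × V → ℝ a continuous bilinear form, T : U → V the map with ⟪T w, v⟫_V = B(w, v) for all v ∈ V, and F : V → ℝ a continuous linear functional. Let U_h be a subspace of U, suppose u ∈ U satisfies B(u, v) = F(v) for all v ∈ V, and suppose u_h ∈ U_h satisfies the discrete equations with optimal test functions: B(u_h, T w) = F(T w) for all w ∈ U_h. Then u_h is a best approximation of u in the energy norm: ‖u − u_h‖_B ≤ ‖u − w‖_B for all w ∈ U_h, i.e. ‖T(u − u_h)‖_V ≤ ‖T(u − w)‖_V for all w ∈ U_h. -/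
open scoped RealInnerProductSpace

/-- Best approximation property of the discrete solution with optimal test
functions: `‖u − u_h‖_B ≤ ‖u − w‖_B` for all `w ∈ U_h`, where
`‖y‖_B = ‖T y‖_V`. -/
theorem best_approximation_in_energy_norm
    {U V : Type*}
    [NormedAddCommGroup U] [InnerProductSpace ℝ U] [CompleteSpace U]
    [NormedAddCommGroup V] [InnerProductSpace ℝ V] [CompleteSpace V]
    (B : U →L[ℝ] V →L[ℝ] ℝ) (T : U → V)
    (hT : ∀ w : U, ∀ v : V, ⟪T w, v⟫ = B w v)
    (F : V →L[ℝ] ℝ)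
    (Uh : Submodule ℝ U)
    (u : U) (hu : ∀ v : V, B u v = F v)
    (uh : U) (huh : uh ∈ Uh)
    (hdisc : ∀ w ∈ Uh, B uh (T w) = F (T w)) :
    ∀ w ∈ Uh, ‖T (u - uh)‖ ≤ ‖T (u - w)‖ := by
  intro w hw
  -- decomposition T(u - w) = T(u - uh) + T(uh - w)
  have hdec : T (u - w) = T (u - uh) + T (uh - w) := by
    apply ext_inner_right ℝ
    intro v
    rw [inner_add_left, hT, hT, hT]
    simp [map_sub]
  -- Galerkin orthogonality
  have horth : ⟪T (u - uh), T (uh - w)⟫ = 0 := by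
    rw [hT]
    have hmem : uh - w ∈ Uh := Uh.sub_mem huh hw
    have h1 : B u (T (uh - w)) = F (T (uh - w)) := hu _
    have h2 : B uh (T (uh - w)) = F (T (uh - w)) := hdisc _ hmem
    simp [map_sub, h1, h2]
  -- now conclude via Pythagoras
  have : ‖T (u - w)‖ ^ 2 = ‖T (u - uh)‖ ^ 2 + ‖T (uh - w)‖ ^ 2 := by
    rw [hdec, norm_add_sq_real, horth]
    ring
  nlinarith [norm_nonneg (T (u - w)), norm_nonneg (T (u - uh)), norm_nonneg (T (uh - w))]
end

section
/- Let U and V be real Hilbert spaces, B : U × V → ℝ a continuous bilinear form, T : U → V the map with ⟪T w, v⟫_V = B(w, v) for all v ∈ V, and F : V → ℝ a continuous linear functional. Assume the energy norm is equivalent to the U-norm: there exist constants 0 < α and M such that α‖y‖_U ≤ ‖T y‖_V ≤ M‖y‖_U for all y ∈ U. Let U_h be a subspace of U, let u ∈ U satisfy B(u, v) = F(v) for all v ∈ V, and let u_h ∈ U_h satisfy B(u_h, T w) = F(T w) for all w ∈ U_h. Then the quasi-best approximation property holds: ‖u − u_h‖_U ≤ (M/α) · ‖u − w‖_U for all w ∈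 U_h. -/
open scoped RealInnerProductSpace

/-- Quasi-best approximation property: if the energy norm `‖T ·‖_V` is
equivalent to the `U`-norm with constants `α` and `M`, then
`‖u − u_h‖_U ≤ (M/α) ‖u − w‖_U` for all `w ∈ U_h`. -/
theorem quasi_best_approximation
    {U V : Type*}
    [NormedAddCommGroup U] [InnerProductSpace ℝ U] [CompleteSpace U]
    [NormedAddCommGroup V] [InnerProductSpace ℝ V] [CompleteSpace V]
    (B : U →L[ℝ] V →L[ℝ] ℝ) (T : U → V)
    (hT : ∀ w : U, ∀ v : V, ⟪T w, v⟫ = B w v)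
    (F : V →L[ℝ] ℝ)
    (α M : ℝ) (hα : 0 < α)
    (hlower : ∀ y : U, α * ‖y‖ ≤ ‖T y‖)
    (hupper : ∀ y : U, ‖T y‖ ≤ M * ‖y‖)
    (Uh : Submodule ℝ U)
    (u : U) (hu : ∀ v : V, B u v = F v)
    (uh : U) (huh : uh ∈ Uh)
    (hdisc : ∀ w ∈ Uh, B uh (T w) = F (T w)) :
    ∀ w ∈ Uh, ‖u - uh‖ ≤ (M / α) * ‖u - w‖ := by
  intro w hw
  -- T is additive on differences
  have hTsub : ∀ x y : U, T (x - y) = T x - T y := by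
    intro x y
    apply ext_inner_right ℝ
    intro v
    rw [inner_sub_left, hT, hT, hT, map_sub]
    simp
  -- Galerkin orthogonality
  have horth : ∀ z ∈ Uh, ⟪T (u - uh), T z⟫ = 0 := by
    intro z hz
    rw [hTsub, inner_sub_left, hT, hT, hu, hdisc z hz, sub_self]
  -- ‖T(u-uh)‖² = ⟪T(u-uh), T(u-w)⟫
  have key : ‖T (u - uh)‖ ^ 2 = ⟪T (u - uh), T (u - w)⟫ := by
    have : T (u - w) = T (u - uh) - T (w - uh) := by
      rw [hTsub, hTsub, hTsub]; abel
    rw [this, inner_sub_right, horth (w - uh) (Uh.sub_mem hw huh), sub_zero,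
      real_inner_self_eq_norm_sq]
  -- hence ‖T(u-uh)‖ ≤ ‖T(u-w)‖
  have hle : ‖T (u - uh)‖ ≤ ‖T (u - w)‖ := by
    rcases eq_or_lt_of_le (norm_nonneg (T (u - uh))) with h0 | h0
    · rw [← h0]; exact norm_nonneg _
    · have := key.le.trans (real_inner_le_norm (T (u - uh)) (T (u - w)))
      rw [pow_two] at this
      exact le_of_mul_le_mul_left this h0
  have h1 : α * ‖u - uh‖ ≤ M * ‖u - w‖ :=
    (hlower (u - uh)).trans (hle.trans (hupper (u - w)))
  rw [div_mul_eq_mul_div, le_div_iff₀ hα, mul_comm]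
  linarith
end

section
/- Let U and V be real Hilbert spaces, B : U × V → ℝ a continuous bilinear form, T : U → V the map with ⟪T w, v⟫_V = B(w, v) for all v ∈ V, and F : V → ℝ a continuous linear functional. Let U_h be a subspace of U. Then for u_h ∈ U_h and e ∈ V the following are equivalent: (i) the pair (u_h, e) solves the saddle-point (mixed) system ⟪e, v⟫_V − B(u_h, v) = −F(v) for all v ∈ V together with B(y, e) = 0 for all y ∈ U_h; (ii) u_h solves the discrete problem with optimal test functions, B(u_h, T w) = F(T w) for all w ∈ U_h, and e is the Riesz representer of the negative residual, ⟪e, v⟫_V = B(u_h, v) − F(v) for all v ∈ V. -/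
open scoped RealInnerProductSpace

/-- Equivalence of the saddle-point (mixed) formulation and the discrete
problem with optimal test functions together with the error representation
equation. -/
theorem saddle_point_iff_optimal_test_functions
    {U V : Type*}
    [NormedAddCommGroup U] [InnerProductSpace ℝ U] [CompleteSpace U]
    [NormedAddCommGroup V] [InnerProductSpace ℝ V] [CompleteSpace V]
    (B : U →L[ℝ] V →L[ℝ] ℝ) (T : U → V)
    (hT : ∀ w : U, ∀ v : V, ⟪T w, v⟫ = B w v)
    (F : V →L[ℝ] ℝ)
    (Uh : Submodule ℝ U)
    (uh : U) (huh : uh ∈ Uh) (e : V) :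
    ((∀ v : V, ⟪e, v⟫ - B uh v = -F v) ∧ (∀ y ∈ Uh, B y e = 0)) ↔
    ((∀ w ∈ Uh, B uh (T w) = F (T w)) ∧
      (∀ v : V, ⟪e, v⟫ = B uh v - F v)) := by
  constructor
  · rintro ⟨h1, h2⟩
    have h1' : ∀ v : V, ⟪e, v⟫ = B uh v - F v := by
      intro v; have := h1 v; linarith
    refine ⟨fun w hw => ?_, h1'⟩
    have h3 : B w e = 0 := h2 w hw
    have h4 : ⟪T w, e⟫ = (0:ℝ) := by rw [hT]; exact h3
    have h5 : ⟪e, T w⟫ = B uh (T w) - F (T w) := h1' (T w)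
    rw [real_inner_comm] at h4
    linarith
  · rintro ⟨h1, h2⟩
    refine ⟨fun v => by have := h2 v; linarith, fun y hy => ?_⟩
    have h4 : ⟪e, T y⟫ = B uh (T y) - F (T y) := h2 (T y)
    have h5 : B uh (T y) = F (T y) := h1 y hy
    have : ⟪T y, e⟫ = B y e := hT y e
    rw [real_inner_comm] at this
    linarith
end

section
/- Let U and V be real Hilbert spaces, B : U × V → ℝ a continuous bilinear form, T : U → V the map with ⟪T w, v⟫_V = B(w, v) for all v ∈ V, and F : V → ℝ a continuous linear functional. Let U_h be a finite-dimensional subspace of U and assume T is injective on U_h (i.e. w ∈ U_h and B(w, v) = 0 for all v ∈ V imply w = 0). Then there exists a unique u_h ∈ U_h satisfying the discrete equations with optimal test functions: B(u_h, T w) = F(T w) for all w ∈ U_h. -/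
open scoped RealInnerProductSpace

/-- Existence and uniqueness of the discrete solution with optimal test
functions on a finite-dimensional trial space `U_h`, provided `T` (i.e. the
bilinear form `B`) is injective on `U_h`. -/
theorem discrete_solution_exists_unique
    {U V : Type*}
    [NormedAddCommGroup U] [InnerProductSpace ℝ U] [CompleteSpace U]
    [NormedAddCommGroup V] [InnerProductSpace ℝ V] [CompleteSpace V]
    (B : U →L[ℝ] V →L[ℝ] ℝ) (T : U → V)
    (hT : ∀ w : U, ∀ v : V, ⟪T w, v⟫ = B w v)
    (F : V →L[ℝ] ℝ)
    (Uh : Submodule ℝ U) [FiniteDimensional ℝ Uh]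
    (hinj : ∀ w ∈ Uh, (∀ v : V, B w v = 0) → w = 0) :
    ∃! uh : Uh, ∀ w ∈ Uh, B (uh : U) (T w) = F (T w) := by
  -- `T` is linear
  have hadd : ∀ x y : U, T (x + y) = T x + T y := by
    intro x y
    apply ext_inner_right ℝ
    intro v
    rw [inner_add_left]
    simp [hT]
  have hsmul : ∀ (c : ℝ) (x : U), T (c • x) = c • T x := by
    intro c x
    apply ext_inner_right ℝ
    intro v
    rw [real_inner_smul_left]
    simp [hT]
  -- the restriction of `T` to `Uh` as a continuous linear map
  let S : Uh →ₗ[ℝ] V :=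
    { toFun := fun u => T (u : U)
      map_add' := fun x y => by simp [hadd]
      map_smul' := fun c x => by simp [hsmul] }
  let Sc : Uh →L[ℝ] V := S.toContinuousLinearMap
  have hSc : ∀ u : Uh, Sc u = T (u : U) := fun u => rfl
  have hScinj : ∀ u : Uh, Sc u = 0 → u = 0 := by
    intro u hu
    have : (u : U) = 0 := by
      apply hinj _ u.2
      intro v
      rw [← hT]
      have : T (u : U) = 0 := hu
      rw [this, inner_zero_left]
    exact Subtype.ext this
  -- the Gram operator `A = Sc† ∘ Sc` is injective, hence bijective
  let A : Uh →L[ℝ] Uh := (ContinuousLinearMap.adjoint Sc).comp Sc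
  have hA : ∀ u w : Uh, ⟪A u, w⟫ = ⟪Sc u, Sc w⟫ := by
    intro u w
    simp [A, ContinuousLinearMap.adjoint_inner_left]
  have hAinj : Function.Injective (A : Uh →ₗ[ℝ] Uh) := by
    rw [injective_iff_map_eq_zero]
    intro u hu
    apply hScinj
    have : ⟪Sc u, Sc u⟫ = 0 := by
      rw [← hA]
      have : A u = 0 := hu
      rw [this, inner_zero_left]
    exact inner_self_eq_zero.mp this
  have hAsurj : Function.Surjective (A : Uh →ₗ[ℝ] Uh) :=
    (LinearMap.injective_iff_surjective).mp hAinj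
  -- Riesz representation of `F`
  let f : V := (InnerProductSpace.toDual ℝ V).symm F
  have hf : ∀ v : V, ⟪f, v⟫ = F v := fun v =>
    InnerProductSpace.toDual_symm_apply
  let b : Uh := ContinuousLinearMap.adjoint Sc f
  have hb : ∀ w : Uh, ⟪b, w⟫ = F (Sc w) := by
    intro w
    simp only [b, ContinuousLinearMap.adjoint_inner_left]
    exact hf _
  obtain ⟨uh, huh⟩ := hAsurj b
  have key : ∀ (u : Uh), (∀ w ∈ Uh, B (u : U) (T w) = F (T w)) ↔ A u = b := by
    intro u
    constructor
    · intro h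
      apply ext_inner_right ℝ
      intro w
      rw [hA, hb, hSc, hSc, hT]
      exact h w w.2
    · intro h w hw
      have := congrArg (fun x => ⟪x, (⟨w, hw⟩ : Uh)⟫) h
      rw [hA, hb, hSc, hSc, hT] at this
      exact this
  refine ⟨uh, (key uh).mpr huh, ?_⟩
  intro y hy
  exact hAinj (((key y).mp hy).trans huh.symm)
end

section
/- Let U and V be real Hilbert spaces, B : U × V → ℝ a continuous bilinear form, T : U → V the map with ⟪T w, v⟫_V = B(w, v) for all v ∈ V, and F : V → ℝ a continuous linear functional. Let U_h be a subspace of U, suppose u ∈ U satisfies B(u, v) = F(v) for all v ∈ V. For each w ∈ U_h let e(w) ∈ V denote the Riesz representer of the residual at w, i.e. ⟪e(w), v⟫_V = F(v) − B(w, v) for all v ∈ V. Then u_h ∈ U_h satisfies B(u_h, T w) = F(T w) for all w ∈ U_h if and only if u_h minimizes the V-norm of the residual representer over U_h: ‖e(u_h)‖_V ≤ ‖e(w)‖_V for all w ∈ U_h. -/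
open scoped RealInnerProductSpace

/-- The discrete solution with optimal test functions is characterized as the
minimizer over `U_h` of the `V`-norm of the residual representer. -/
theorem optimal_test_functions_iff_residual_minimization
    {U V : Type*}
    [NormedAddCommGroup U] [InnerProductSpace ℝ U] [CompleteSpace U]
    [NormedAddCommGroup V] [InnerProductSpace ℝ V] [CompleteSpace V]
    (B : U →L[ℝ] V →L[ℝ] ℝ) (T : U → V)
    (hT : ∀ w : U, ∀ v : V, ⟪T w, v⟫ = B w v)
    (F : V →L[ℝ] ℝ)
    (Uh : Submodule ℝ U)
    (u : U) (hu : ∀ v : V, B u v = F v)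
    (e : U → V)
    (he : ∀ w ∈ Uh, ∀ v : V, ⟪e w, v⟫ = F v - B w v)
    (uh : U) (huh : uh ∈ Uh) :
    (∀ w ∈ Uh, B uh (T w) = F (T w)) ↔ (∀ w ∈ Uh, ‖e uh‖ ≤ ‖e w‖) := by
  constructor
  · intro h w hw
    -- e w = e uh - (T w - T uh)
    have hew : e w = e uh - (T w - T uh) := by
      apply ext_inner_right ℝ
      intro v
      rw [he w hw v, inner_sub_left, inner_sub_left, he uh huh v, hT, hT]
      ring
    have horth : ⟪e uh, T w - T uh⟫ = 0 := by
      rw [inner_sub_right, he uh huh (T w), he uh huh (T uh), h w hw, h uh huh]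
      ring
    have hsq : ‖e uh‖ ^ 2 ≤ ‖e w‖ ^ 2 := by
      rw [hew, @norm_sub_sq_real, horth]
      nlinarith [sq_nonneg ‖T w - T uh‖]
    nlinarith [norm_nonneg (e uh), norm_nonneg (e w)]
  · intro h w hw
    have key : ∀ t : ℝ, e (uh + t • w) = e uh - t • T w := by
      intro t
      apply ext_inner_right ℝ
      intro v
      rw [he _ (Uh.add_mem huh (Uh.smul_mem t hw)) v, inner_sub_left,
        he uh huh v, real_inner_smul_left, hT]
      simp
      ring
    set c := ⟪e uh, T w⟫ with hc
    set n := ‖T w‖ ^ 2 with hn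
    have hineq : ∀ t : ℝ, 2 * t * c ≤ t ^ 2 * n := by
      intro t
      have h1 := h (uh + t • w) (Uh.add_mem huh (Uh.smul_mem t hw))
      have h2 : ‖e uh‖ ^ 2 ≤ ‖e (uh + t • w)‖ ^ 2 := by
        nlinarith [norm_nonneg (e uh), norm_nonneg (e (uh + t • w))]
      rw [key t, @norm_sub_sq_real, real_inner_smul_right, norm_smul] at h2
      simp [mul_pow] at h2
      nlinarith [abs_nonneg t]
    have hn0 : 0 ≤ n := by positivity
    have hc0 : c = 0 := by
      have hpos : (0:ℝ) < n + 1 := by linarith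
      set t : ℝ := c / (n + 1) with htdef
      have ht : t * (n + 1) = c := by
        rw [htdef]; exact div_mul_cancel₀ c hpos.ne'
      have h1 := hineq t
      rw [← ht] at h1
      have ht2 : t ^ 2 ≤ 0 := by nlinarith [sq_nonneg t]
      have ht0 : t = 0 := by
        have := le_antisymm ht2 (sq_nonneg t)
        exact pow_eq_zero_iff two_ne_zero |>.mp this
      rw [← ht, ht0, zero_mul]
    have hB := he uh huh (T w)
    rw [← hc, hc0] at hB
    linarith
end

section
/- Let U and V be real Hilbert spaces, B : U × V → ℝ a continuous bilinear form, T : U → V the map with ⟪T w, v⟫_V = B(w, v) for all v ∈ V, and F : V → ℝ a continuous linear functional. Let U_h be a subspace of U on which T is injective (w ∈ U_h and T w = 0 imply w = 0), let u ∈ U satisfy B(u, v) = F(v) for all v ∈ V, and suppose u_h ∈ U_h satisfies B(u_h, T w) = F(T w) for all w ∈ U_h. Then u_h is the unique minimizer of the energy-norm error over U_h: for every w ∈ U_h with w ≠ u_h one has ‖T(u − u_h)‖_V < ‖T(u − w)‖_V. -/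
open scoped RealInnerProductSpace

/-- Strict (unique) minimization of the energy-norm error by the discrete
solution with optimal test functions, when `T` is injective on `U_h`. -/
theorem discrete_solution_unique_energy_minimizer
    {U V : Type*}
    [NormedAddCommGroup U] [InnerProductSpace ℝ U] [CompleteSpace U]
    [NormedAddCommGroup V] [InnerProductSpace ℝ V] [CompleteSpace V]
    (B : U →L[ℝ] V →L[ℝ] ℝ) (T : U → V)
    (hT : ∀ w : U, ∀ v : V, ⟪T w, v⟫ = B w v)
    (F : V →L[ℝ] ℝ)
    (Uh : Submodule ℝ U)
    (hinj : ∀ w ∈ Uh, T w = 0 → w = 0)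
    (u : U) (hu : ∀ v : V, B u v = F v)
    (uh : U) (huh : uh ∈ Uh)
    (hdisc : ∀ w ∈ Uh, B uh (T w) = F (T w)) :
    ∀ w ∈ Uh, w ≠ uh → ‖T (u - uh)‖ < ‖T (u - w)‖ := by
  intro w hw hne
  set d := uh - w with hd_def
  have hd : d ∈ Uh := sub_mem huh hw
  have hdne : d ≠ 0 := sub_ne_zero.mpr (Ne.symm hne)
  have hTd : T d ≠ 0 := fun h => hdne (hinj d hd h)
  have hsplit : T (u - w) = T (u - uh) + T d := by
    apply ext_inner_right ℝ
    intro v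
    rw [inner_add_left, hT, hT, hT]
    simp only [hd_def, map_sub, ContinuousLinearMap.sub_apply]
    ring
  have horth : ⟪T (u - uh), T d⟫ = 0 := by
    rw [hT]
    have h1 : B (u - uh) (T d) = B u (T d) - B uh (T d) := by
      simp [map_sub]
    rw [h1, hu, hdisc d hd, sub_self]
  have hTdpos : (0:ℝ) < ‖T d‖ := norm_pos_iff.mpr hTd
  rw [hsplit]
  have := norm_add_sq_real (T (u - uh)) (T d)
  apply lt_of_pow_lt_pow_left₀ 2 (norm_nonneg _)
  rw [norm_add_sq_real, horth]
  nlinarith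
end
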